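/- (Central configuration identity, equation (2.108).) For every u ∈ (1/√3, √3), set m₁ = m₃ = m(u), m₂ = m₄ = 1, and define the points of ℝ²: a₁ = (0, u)/α(u), a₂ = (1, 0)/α(u), a₃ = (0, −u)/α(u), a₄ = (−1, 0)/α(u). Then for each i ∈ {1,2,3,4}: μ(u)·mᵢ·aᵢ + Σ_{j≠i} (mᵢ·mⱼ)·(aⱼ − aᵢ)/‖aᵢ − aⱼ‖³ = 0, where ‖·‖ is the Euclidean norm on ℝ². -/

import Mathlib

/-!
The rhombus with vertices `±p, ±q`, `‖p + q‖ = ‖p - q‖`, masses `M₁` at `±p` and `M₂` at `±q`,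
is central as soon as the forces on `p` and on `q` balance; those on `-p, -q` are their negatives.
The balance at `p` reads `μ = M₁ / (4‖p‖³) + 2 M₂ / ‖p - q‖³`, and at `q` the same with the roles
swapped. For `p = (0, u)/α`, `q = (1, 0)/α` and `c = √(1 + u²)` the two conditions become
`μ = α³ (m / (4u³) + 2 / c³) = α³ (1/4 + 2m / c³)`. The second equality is the defining equation
`m (8u³ - c³) = u³ (8 - c³)` of `m(u)`, and `α² = 2mu² + 2` turns the right-hand sides into `μ(u)`.
For `u ∈ (1/√3, √3)` we have `c < 2` and `c < 2u`, so `m(u) > 0` and `α(u)` is a genuine square root.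
-/

noncomputable def mParam (u : ℝ) : ℝ :=
  (8 * u ^ 3 - u ^ 3 * (1 + u ^ 2) ^ ((3 : ℝ) / 2)) /
    (8 * u ^ 3 - (1 + u ^ 2) ^ ((3 : ℝ) / 2))

noncomputable def alphaParam (u : ℝ) : ℝ :=
  Real.sqrt (2 * mParam u * u ^ 2 + 2)

noncomputable def muParam (u : ℝ) : ℝ :=
  4 * mParam u * alphaParam u / Real.sqrt (1 + u ^ 2) +
    alphaParam u * (mParam u) ^ 2 / (2 * u) + alphaParam u / 2

noncomputable def phi1 (u : ℝ) : ℝ :=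
  1 + 2 * (mParam u + 1) * (alphaParam u) ^ 3 * (2 - u ^ 2) /
    (muParam u * (1 + u ^ 2) ^ ((5 : ℝ) / 2))

noncomputable def phi2 (u : ℝ) : ℝ :=
  1 + 2 * (mParam u + 1) * (alphaParam u) ^ 3 * (2 * u ^ 2 - 1) /
    (muParam u * (1 + u ^ 2) ^ ((5 : ℝ) / 2))

noncomputable def psi1 (u : ℝ) : ℝ :=
  1 + (4 * alphaParam u / muParam u) *
    ((2 * (mParam u) ^ 2 * u ^ 4 + (6 * mParam u - (mParam u) ^ 2 - 1) * u ^ 2 + 2) /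
        (1 + u ^ 2) ^ ((5 : ℝ) / 2) -
      mParam u * u ^ 2 / 8 - mParam u / (8 * u ^ 3))

noncomputable def psi2 (u : ℝ) : ℝ :=
  1 + (4 * alphaParam u / muParam u) *
    ((-(mParam u) ^ 2 * u ^ 4 + (2 * (mParam u) ^ 2 - 6 * mParam u + 2) * u ^ 2 - 1) /
        (1 + u ^ 2) ^ ((5 : ℝ) / 2) +
      mParam u * u ^ 2 / 4 + mParam u / (4 * u ^ 3))

/-- The four vertices of the rhombus central configuration, as points of the
Euclidean plane. -/
noncomputable def rhombusPt (u : ℝ) : Fin 4 → EuclideanSpace ℝ (Fin 2)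
  | 0 => (alphaParam u)⁻¹ • (WithLp.equiv 2 (Fin 2 → ℝ)).symm ![0, u]
  | 1 => (alphaParam u)⁻¹ • (WithLp.equiv 2 (Fin 2 → ℝ)).symm ![1, 0]
  | 2 => (alphaParam u)⁻¹ • (WithLp.equiv 2 (Fin 2 → ℝ)).symm ![0, -u]
  | 3 => (alphaParam u)⁻¹ • (WithLp.equiv 2 (Fin 2 → ℝ)).symm ![-1, 0]

/-- The masses `m₁ = m₃ = m(u)`, `m₂ = m₄ = 1`. -/
noncomputable def rhombusMass (u : ℝ) : Fin 4 → ℝ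
  | 0 => mParam u
  | 1 => 1
  | 2 => mParam u
  | 3 => 1

def IsCentralConfig {ι E : Type*} [Fintype ι] [DecidableEq ι] [NormedAddCommGroup E]
    [NormedSpace ℝ E] (μ : ℝ) (m : ι → ℝ) (q : ι → E) : Prop :=
  ∀ i, (μ * m i) • q i +
    ∑ j ∈ Finset.univ.erase i, ((m i * m j) / ‖q i - q j‖ ^ 3) • (q j - q i) = 0

theorem isCentralConfig_rhombus {E : Type*} [NormedAddCommGroup E] [NormedSpace ℝ E]
    {p q : E} {μ M₁ M₂ : ℝ} (hpq : ‖p + q‖ = ‖p - q‖)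
    (h₁ : μ = M₁ / (4 * ‖p‖ ^ 3) + 2 * M₂ / ‖p - q‖ ^ 3)
    (h₂ : μ = M₂ / (4 * ‖q‖ ^ 3) + 2 * M₁ / ‖p - q‖ ^ 3) :
    IsCentralConfig μ ![M₁, M₂, M₁, M₂] ![p, q, -p, -q] := by
  have norm_add_self (v : E) : ‖v + v‖ = 2 * ‖v‖ := by
    rw [← two_smul ℝ, norm_smul, Real.norm_two]
  intro i
  rw [Finset.sum_erase _ (by simp), Fin.sum_univ_four]
  fin_cases i <;>
    simp only [Fin.reduceFinMk, Matrix.cons_val, sub_self, norm_zero, smul_zero, add_zero,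
      zero_add, sub_neg_eq_add, ← neg_add', neg_add_eq_sub, norm_neg, add_comm q p,
      norm_sub_rev q p, hpq, norm_add_self]
    <;> [rw [h₁]; rw [h₂]; rw [h₁]; rw [h₂]] <;> module

theorem norm_smul_toLp_pair (a x y : ℝ) : ‖a • !₂[x, y]‖ = |a| * √(x ^ 2 + y ^ 2) := by
  simp [norm_smul, EuclideanSpace.norm_eq, Fin.sum_univ_two]

section

variable {u : ℝ}

theorem sqrt_one_add_sq_lt_two_mul (hu : 1 / √3 < u) : √(1 + u ^ 2) < 2 * u := by
  have hu0 : 0 < u := lt_trans (by positivity) hu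
  rw [div_lt_iff₀ (by positivity)] at hu
  rw [Real.sqrt_lt' (by positivity)]
  nlinarith [Real.sq_sqrt (show (0 : ℝ) ≤ 3 by norm_num)]

theorem sqrt_one_add_sq_lt_two (hu0 : 0 ≤ u) (hu : u < √3) : √(1 + u ^ 2) < 2 := by
  rw [Real.sqrt_lt' (by positivity)]
  nlinarith [Real.sq_sqrt (show (0 : ℝ) ≤ 3 by norm_num)]

theorem rpow_three_div_two_eq_sqrt_pow {x : ℝ} (hx : 0 ≤ x) : x ^ ((3 : ℝ) / 2) = √x ^ 3 := by
  rw [Real.rpow_div_two_eq_sqrt _ hx]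
  norm_cast

theorem mParam_eq (u : ℝ) :
    mParam u = (8 * u ^ 3 - u ^ 3 * √(1 + u ^ 2) ^ 3) / (8 * u ^ 3 - √(1 + u ^ 2) ^ 3) := by
  rw [mParam, rpow_three_div_two_eq_sqrt_pow (by positivity)]

theorem mParam_mul_eq (hu1 : 1 / √3 < u) :
    mParam u * (8 * u ^ 3 - √(1 + u ^ 2) ^ 3) = 8 * u ^ 3 - u ^ 3 * √(1 + u ^ 2) ^ 3 := by
  have hc : √(1 + u ^ 2) ^ 3 < (2 * u) ^ 3 :=
    pow_lt_pow_left₀ (sqrt_one_add_sq_lt_two_mul hu1) (Real.sqrt_nonneg _) three_ne_zero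
  rw [mParam_eq, div_mul_cancel₀]
  nlinarith

theorem mParam_pos (hu1 : 1 / √3 < u) (hu2 : u < √3) : 0 < mParam u := by
  have hu0 : 0 < u := lt_trans (by positivity) hu1
  have hc := Real.sqrt_nonneg (1 + u ^ 2)
  rw [mParam_eq]
  apply div_pos
  · nlinarith [pow_lt_pow_left₀ (sqrt_one_add_sq_lt_two hu0.le hu2) hc three_ne_zero, pow_pos hu0 3]
  · nlinarith [pow_lt_pow_left₀ (sqrt_one_add_sq_lt_two_mul hu1) hc three_ne_zero]

theorem alphaParam_sq (hu1 : 1 / √3 < u) (hu2 : u < √3) :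
    alphaParam u ^ 2 = 2 * mParam u * u ^ 2 + 2 :=
  Real.sq_sqrt (by have := mParam_pos hu1 hu2; positivity)

theorem alphaParam_pos (hu1 : 1 / √3 < u) (hu2 : u < √3) : 0 < alphaParam u :=
  Real.sqrt_pos.mpr (by have := mParam_pos hu1 hu2; positivity)

theorem muParam_eq_balance_zero (hu1 : 1 / √3 < u) (hu2 : u < √3) :
    muParam u = mParam u / (4 * (u / alphaParam u) ^ 3) +
      2 * 1 / (√(1 + u ^ 2) / alphaParam u) ^ 3 := by
  have hu0 : 0 < u := lt_trans (by positivity) hu1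
  have hm := mParam_mul_eq hu1
  have hα := alphaParam_sq hu1 hu2
  have hc : √(1 + u ^ 2) ^ 2 = 1 + u ^ 2 := Real.sq_sqrt (by positivity)
  have : 0 < √(1 + u ^ 2) := by positivity
  have := alphaParam_pos hu1 hu2
  rw [muParam]
  field_simp
  linear_combination 4 * hm + 32 * u ^ 3 * mParam u * hc -
    2 * (mParam u * √(1 + u ^ 2) ^ 3 + 8 * u ^ 3) * hα

theorem muParam_eq_balance_one (hu1 : 1 / √3 < u) (hu2 : u < √3) :
    muParam u = 1 / (4 * (1 / alphaParam u) ^ 3) +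
      2 * mParam u / (√(1 + u ^ 2) / alphaParam u) ^ 3 := by
  have hu0 : 0 < u := lt_trans (by positivity) hu1
  have hm := mParam_mul_eq hu1
  have hα := alphaParam_sq hu1 hu2
  have hc : √(1 + u ^ 2) ^ 2 = 1 + u ^ 2 := Real.sq_sqrt (by positivity)
  have : 0 < √(1 + u ^ 2) := by positivity
  have := alphaParam_pos hu1 hu2
  rw [muParam]
  field_simp
  linear_combination (-4 * mParam u) * hm + 32 * u * mParam u * hc -
    2 * u * (√(1 + u ^ 2) ^ 3 + 8 * mParam u) * hα

theorem rhombusPt_eq :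
    rhombusPt u = ![rhombusPt u 0, rhombusPt u 1, -rhombusPt u 0, -rhombusPt u 1] := by
  ext i k
  fin_cases i <;> fin_cases k <;> simp [rhombusPt]

theorem rhombusMass_eq : rhombusMass u = ![mParam u, 1, mParam u, 1] := by
  ext i
  fin_cases i <;> rfl

theorem norm_rhombusPt_zero (hu : 0 < u) (hα : 0 < alphaParam u) :
    ‖rhombusPt u 0‖ = u / alphaParam u := by
  simp [rhombusPt, norm_smul_toLp_pair, abs_of_pos hα, Real.sqrt_sq hu.le, div_eq_inv_mul]

theorem norm_rhombusPt_one (hα : 0 < alphaParam u) : ‖rhombusPt u 1‖ = 1 / alphaParam u := by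
  simp [rhombusPt, norm_smul_toLp_pair, abs_of_pos hα]

theorem norm_rhombusPt_zero_sub_one (hα : 0 < alphaParam u) :
    ‖rhombusPt u 0 - rhombusPt u 1‖ = √(1 + u ^ 2) / alphaParam u := by
  simp [rhombusPt, ← smul_sub, ← WithLp.toLp_sub, norm_smul_toLp_pair, abs_of_pos hα, div_eq_inv_mul]

theorem norm_rhombusPt_zero_add_one (hα : 0 < alphaParam u) :
    ‖rhombusPt u 0 + rhombusPt u 1‖ = √(1 + u ^ 2) / alphaParam u := by
  simp [rhombusPt, ← smul_add, ← WithLp.toLp_add, norm_smul_toLp_pair, abs_of_pos hα, div_eq_inv_mul]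

end

/-- Central configuration identity (equation (2.108)):
`μ(u)·mᵢ·aᵢ + Σ_{j≠i} mᵢ mⱼ (aⱼ − aᵢ)/‖aᵢ − aⱼ‖³ = 0`. -/
theorem rhombus_central_configuration (u : ℝ) (hu1 : 1 / Real.sqrt 3 < u)
    (hu2 : u < Real.sqrt 3) (i : Fin 4) :
    (muParam u * rhombusMass u i) • rhombusPt u i +
      ∑ j ∈ Finset.univ.erase i,
        ((rhombusMass u i * rhombusMass u j) / ‖rhombusPt u i - rhombusPt u j‖ ^ 3) •
          (rhombusPt u j - rhombusPt u i) = 0 := by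
  have hu : 0 < u := lt_trans (by positivity) hu1
  have hα := alphaParam_pos hu1 hu2
  have hcentral : IsCentralConfig (muParam u) ![mParam u, 1, mParam u, 1]
      ![rhombusPt u 0, rhombusPt u 1, -rhombusPt u 0, -rhombusPt u 1] := by
    apply isCentralConfig_rhombus
    · rw [norm_rhombusPt_zero_add_one hα, norm_rhombusPt_zero_sub_one hα]
    · rw [norm_rhombusPt_zero hu hα, norm_rhombusPt_zero_sub_one hα]
      exact muParam_eq_balance_zero hu1 hu2
    · rw [norm_rhombusPt_one hα, norm_rhombusPt_zero_sub_one hα]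
      exact muParam_eq_balance_one hu1 hu2
  rw [← rhombusPt_eq, ← rhombusMass_eq] at hcentral
  exact hcentral i
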